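/- Under the replicator update with positive matrix M restricted to the support, strict inequality F(p') > F(p) holds unless p is a fixed point of the replicator map (i.e., (Mp)_i = pᵀMp for all i in the support of p). -/

import Mathlib

open Matrix

/-!
Write `F = pᵀMp` and `x i = (Mp)_i / F`, so that `p' i = p i * x i`. Against the weights
`p i * M i j * p j`, which sum to `F`, both `x i⁻¹` and (by symmetry of `M`) `x j⁻¹` also sum to
`F`, because `p i * (Mp)_i / x i = F * p i` and `∑ p i = 1`, while `x i * x j` sums to `F(p')`.
Summing the three-term AM–GM inequality `x i * x j + x i⁻¹ + x j⁻¹ ≥ 3` against the weights gives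
`F(p') + 2F ≥ 3F`. If `p` is not a fixed point, some `i` in the support has `x i ≠ 1`, and since
`(Mp)_i > 0` some `j` gives the pair `(i, j)` a positive weight, making the inequality strict.
-/

theorem three_le_mul_add_inv_add_inv {x y : ℝ} (hx : 0 < x) (hy : 0 < y) :
    3 ≤ x * y + x⁻¹ + y⁻¹ := by
  have h : x * y + x⁻¹ + y⁻¹ - 3 = (x ^ 2 * y ^ 2 + x + y - 3 * x * y) / (x * y) := by
    field_simp
    ring
  rw [← sub_nonneg, h]
  refine div_nonneg ?_ (by positivity)
  nlinarith [sq_nonneg (x - 1), sq_nonneg (y - 1), sq_nonneg (x - y), sq_nonneg (x * y - 1),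
    mul_pos hx hy]

theorem three_lt_mul_add_inv_add_inv {x y : ℝ} (hx : 0 < x) (hy : 0 < y) (hx₁ : x ≠ 1) :
    3 < x * y + x⁻¹ + y⁻¹ := by
  have h : x * y + x⁻¹ + y⁻¹ - 3 = (x ^ 2 * y ^ 2 + x + y - 3 * x * y) / (x * y) := by
    field_simp
    ring
  rw [← sub_pos, h]
  refine div_pos ?_ (by positivity)
  have : 0 < (x - 1) ^ 2 := by positivity
  nlinarith [sq_nonneg (y - 1), sq_nonneg (x - y), sq_nonneg (x * y - 1), mul_pos hx hy]

section

variable {ι : Type*} [Fintype ι]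

theorem Matrix.IsSymm.dotProduct_mulVec_comm {R : Type*} [CommSemiring R] {M : Matrix ι ι R}
    (hM : M.IsSymm) (v w : ι → R) : v ⬝ᵥ M *ᵥ w = w ⬝ᵥ M *ᵥ v := by
  rw [dotProduct_mulVec, ← mulVec_transpose, hM.eq, dotProduct_comm]

theorem div_div_const_dotProduct {K : Type*} [Field K] {p v : ι → K}
    (h : ∀ i, p i ≠ 0 → v i ≠ 0) (c : K) : (p / fun i => v i / c) ⬝ᵥ v = c * ∑ i, p i := by
  simp only [dotProduct, Finset.mul_sum, Pi.div_apply]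
  refine Finset.sum_congr rfl fun i _ => ?_
  by_cases hi : p i = 0
  · simp [hi]
  by_cases hc : c = 0
  · simp [hc]
  field_simp [h i hi]

theorem three_mul_dotProduct_mulVec_lt {M : Matrix ι ι ℝ} (hM : ∀ i j, 0 ≤ M i j)
    {p x : ι → ℝ} (hp : ∀ i, 0 ≤ p i) (hx : ∀ i, p i ≠ 0 → 0 < x i) {i₀ j₀ : ι}
    (hpos : 0 < p i₀ * M i₀ j₀ * p j₀) (hx₀ : x i₀ ≠ 1) :
    3 * (p ⬝ᵥ M *ᵥ p) < (p * x) ⬝ᵥ M *ᵥ (p * x) + (p / x) ⬝ᵥ M *ᵥ p + p ⬝ᵥ M *ᵥ (p / x) := by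
  have hsummand : ∀ i j, p i * x i * M i j * (p j * x j) + p i / x i * M i j * p j
      + p i * M i j * (p j / x j) = p i * M i j * p j * (x i * x j + (x i)⁻¹ + (x j)⁻¹) := by
    intro i j
    ring
  have hle : ∀ i j,
      3 * (p i * M i j * p j) ≤ p i * M i j * p j * (x i * x j + (x i)⁻¹ + (x j)⁻¹) := by
    intro i j
    by_cases hi : p i = 0
    · simp [hi]
    by_cases hj : p j = 0
    · simp [hj]
    rw [mul_comm]
    exact mul_le_mul_of_nonneg_left (three_le_mul_add_inv_add_inv (hx i hi) (hx j hj))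
      (mul_nonneg (mul_nonneg (hp i) (hM i j)) (hp j))
  have hlt : 3 * (p i₀ * M i₀ j₀ * p j₀)
      < p i₀ * M i₀ j₀ * p j₀ * (x i₀ * x j₀ + (x i₀)⁻¹ + (x j₀)⁻¹) := by
    have hi : p i₀ ≠ 0 := by rintro h; simp [h] at hpos
    have hj : p j₀ ≠ 0 := by rintro h; simp [h] at hpos
    rw [mul_comm]
    exact mul_lt_mul_of_pos_left (three_lt_mul_add_inv_add_inv (hx i₀ hi) (hx j₀ hj) hx₀) hpos
  simp only [dot_mulVec_eq_sum_sum, Finset.mul_sum, ← Finset.sum_add_distrib, Pi.mul_apply,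
    Pi.div_apply, hsummand]
  exact Finset.sum_lt_sum (fun j _ => Finset.sum_le_sum fun i _ => hle i j)
    ⟨j₀, Finset.mem_univ _, Finset.sum_lt_sum (fun i _ => hle i j₀) ⟨i₀, Finset.mem_univ _, hlt⟩⟩

end

/-- Strict Baum–Eagon inequality: under the replicator update, `F(p') > F(p)`
unless `p` is a fixed point, i.e. `(Mp)_i = pᵀMp` for all `i` in the support. -/
theorem baum_eagon_strict (n : ℕ) (M : Matrix (Fin n) (Fin n) ℝ)
    (hsymm : M.IsSymm) (hnonneg : ∀ i j, 0 ≤ M i j)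
    (p : Fin n → ℝ) (hp : p ∈ stdSimplex ℝ (Fin n))
    (hposM : ∀ i, p i ≠ 0 → 0 < (M.mulVec p) i)
    (hpos : 0 < p ⬝ᵥ M.mulVec p)
    (p' : Fin n → ℝ)
    (hp' : ∀ i, p' i = p i * (M.mulVec p) i / (p ⬝ᵥ M.mulVec p))
    (hnotfix : ¬ ∀ i, p i ≠ 0 → (M.mulVec p) i = p ⬝ᵥ M.mulVec p) :
    p ⬝ᵥ M.mulVec p < p' ⬝ᵥ M.mulVec p' := by
  set F := p ⬝ᵥ M *ᵥ p
  set x : Fin n → ℝ := fun i => (M *ᵥ p) i / F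
  have hp'x : p' = p * x := funext fun i => by rw [hp' i, Pi.mul_apply, mul_div_assoc]
  have hrecip : (p / x) ⬝ᵥ M *ᵥ p = F := by
    rw [div_div_const_dotProduct (fun i hi => (hposM i hi).ne') F, hp.2, mul_one]
  obtain ⟨i₀, hi₀, hx₀⟩ : ∃ i, p i ≠ 0 ∧ (M *ᵥ p) i ≠ F := by simpa using hnotfix
  obtain ⟨j₀, -, hj₀⟩ : ∃ j ∈ Finset.univ, 0 < M i₀ j * p j :=
    Finset.exists_lt_of_sum_lt (by simpa [mulVec, dotProduct] using hposM i₀ hi₀)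
  have key := three_mul_dotProduct_mulVec_lt hnonneg hp.1 (x := x)
    (fun i hi => div_pos (hposM i hi) hpos)
    (by rw [mul_assoc]; exact mul_pos ((hp.1 i₀).lt_of_ne' hi₀) hj₀)
    (fun h => hx₀ ((div_eq_one_iff_eq hpos.ne').mp h))
  rw [hsymm.dotProduct_mulVec_comm p (p / x), hrecip, ← hp'x] at key
  linarith
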